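/- arXiv:1703.08698 — 3 statements merged into one kernel-verified Lean document; each statement's English description precedes it below -/
import Mathlib

section
/- For n patients and n doctors with strict full preference lists on both sides, a stable matching always exists. -/
/-- A pair `(p, d)` blocks the matching `M` (a bijection from patients to
doctors, both indexed by `Fin n`): they are not matched to each other, `p`
strictly prefers `d` to his partner and `d` strictly prefers `p` to his
partner (lower rank value = more preferred). -/
def blocks {n : ℕ} (prank drank : Fin n → Fin n → ℕ)
    (M : Equiv.Perm (Fin n)) (p d : Fin n) : Prop :=
  M p ≠ d ∧ prank p d < prank p (M p) ∧ drank d p < drank d (M.symm d)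

open Finset

section GS
variable {n : ℕ}

/-- The favorite doctor of `p` outside the rejection set `A`. -/
noncomputable def gsBest (prank : Fin n → Fin n → ℕ) (p : Fin n) (A : Finset (Fin n)) : Fin n :=
  if h : Aᶜ.Nonempty then (Aᶜ.exists_min_image (prank p) h).choose else p

lemma gsBest_notMem {prank : Fin n → Fin n → ℕ} {p : Fin n} {A : Finset (Fin n)}
    (h : Aᶜ.Nonempty) : gsBest prank p A ∉ A := by
  rw [gsBest, dif_pos h]
  have := (Aᶜ.exists_min_image (prank p) h).choose_spec.1
  simpa using this

lemma gsBest_min {prank : Fin n → Fin n → ℕ} {p : Fin n} {A : Finset (Fin n)}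
    (h : Aᶜ.Nonempty) {d : Fin n} (hd : d ∉ A) :
    prank p (gsBest prank p A) ≤ prank p d := by
  rw [gsBest, dif_pos h]
  exact (Aᶜ.exists_min_image (prank p) h).choose_spec.2 d (by simpa using hd)

/-- `p` is rejected by his current favorite at state `S`. -/
def gsRejected (prank drank : Fin n → Fin n → ℕ) (S : Fin n → Finset (Fin n)) (p : Fin n) :
    Prop :=
  ∃ q, q ≠ p ∧ gsBest prank q (S q) = gsBest prank p (S p) ∧
    drank (gsBest prank p (S p)) q < drank (gsBest prank p (S p)) p

open scoped Classical in
/-- One parallel round of deferred acceptance. -/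
noncomputable def gsStep (prank drank : Fin n → Fin n → ℕ) (S : Fin n → Finset (Fin n)) :
    Fin n → Finset (Fin n) :=
  fun p => if gsRejected prank drank S p then insert (gsBest prank p (S p)) (S p) else S p

def gsInv (prank drank : Fin n → Fin n → ℕ) (S : Fin n → Finset (Fin n)) : Prop :=
  ∀ p : Fin n, (S p)ᶜ.Nonempty ∧
    ∀ d ∈ S p, ∃ q, gsBest prank q (S q) = d ∧ drank d q < drank d p

/-- The favorite current proposer of a doctor survives a step. -/
lemma gsPersist (prank drank : Fin n → Fin n → ℕ) (S : Fin n → Finset (Fin n))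
    {d q : Fin n} (hq : gsBest prank q (S q) = d) :
    ∃ q', gsBest prank q' (gsStep prank drank S q') = d ∧ drank d q' ≤ drank d q := by
  classical
  set P : Finset (Fin n) := univ.filter (fun r => gsBest prank r (S r) = d) with hP
  have hqP : q ∈ P := by simp [hP, hq]
  obtain ⟨q', hq'P, hmin⟩ := P.exists_min_image (drank d) ⟨q, hqP⟩
  have hq'best : gsBest prank q' (S q') = d := by simpa [hP] using hq'P
  have hnotrej : ¬ gsRejected prank drank S q' := by
    rintro ⟨r, hrne, hrb, hlt⟩
    rw [hq'best] at hrb hlt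
    exact absurd hlt (not_lt.2 (hmin r (by simp [hP, hrb])))
  refine ⟨q', ?_, hmin q hqP⟩
  rw [gsStep, if_neg hnotrej, hq'best]

lemma gsInv_step {prank drank : Fin n → Fin n → ℕ} {S : Fin n → Finset (Fin n)}
    (hI : gsInv prank drank S) : gsInv prank drank (gsStep prank drank S) := by
  classical
  -- first the second part of the invariant
  have h2 : ∀ p : Fin n, ∀ d ∈ gsStep prank drank S p,
      ∃ q, gsBest prank q (gsStep prank drank S q) = d ∧ drank d q < drank d p := by
    intro p d hd
    have hold : ∀ d ∈ S p, ∃ q, gsBest prank q (gsStep prank drank S q) = d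
        ∧ drank d q < drank d p := by
      intro d hd
      obtain ⟨q, hqb, hqlt⟩ := (hI p).2 d hd
      obtain ⟨q', hq'b, hq'le⟩ := gsPersist prank drank S hqb
      exact ⟨q', hq'b, lt_of_le_of_lt hq'le hqlt⟩
    by_cases hr : gsRejected prank drank S p
    · rw [gsStep, if_pos hr] at hd
      rcases Finset.mem_insert.1 hd with hd | hd
      · obtain ⟨r, hrne, hrb, hrlt⟩ := hr
        rw [← hd] at hrb hrlt
        obtain ⟨q', hq'b, hq'le⟩ := gsPersist prank drank S hrb
        exact ⟨q', hq'b, lt_of_le_of_lt hq'le hrlt⟩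
      · exact hold d hd
    · rw [gsStep, if_neg hr] at hd
      exact hold d hd
  intro p
  refine ⟨?_, h2 p⟩
  -- nonempty complement
  by_contra hne
  have huniv : gsStep prank drank S p = univ := by
    rw [← Finset.compl_eq_empty_iff]
    exact Finset.not_nonempty_iff_eq_empty.1 hne
  by_cases hr : gsRejected prank drank S p
  · -- pigeonhole: every doctor has a proposer ≠ p at the old state
    have hSp := (hI p).1
    have hb := gsBest_notMem (prank := prank) (p := p) hSp
    have hall : ∀ d : Fin n, ∃ q, gsBest prank q (S q) = d ∧ q ≠ p := by
      intro d
      have hd : d ∈ insert (gsBest prank p (S p)) (S p) := by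
        rw [gsStep, if_pos hr] at huniv
        rw [huniv]; exact mem_univ d
      rcases Finset.mem_insert.1 hd with hd | hd
      · obtain ⟨r, hrne, hrb, _⟩ := hr
        exact ⟨r, by rw [hrb, hd], hrne⟩
      · obtain ⟨q, hqb, _⟩ := (hI p).2 d hd
        refine ⟨q, hqb, fun h => ?_⟩
        rw [h] at hqb
        exact hb (hqb ▸ hd)
    choose f hf hfne using hall
    have hinj : Function.Injective f := by
      intro a b hab
      rw [← hf a, ← hf b, hab]
    have hsurj := Finite.injective_iff_surjective.1 hinj
    obtain ⟨d, hdp⟩ := hsurj p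
    exact hfne d hdp
  · rw [gsStep, if_neg hr] at huniv
    obtain ⟨x, hx⟩ := (hI p).1
    rw [huniv] at hx
    simp at hx

lemma gsMeasure_lt {prank drank : Fin n → Fin n → ℕ} {S : Fin n → Finset (Fin n)}
    (hI : gsInv prank drank S) {p₀ : Fin n} (hr : gsRejected prank drank S p₀) :
    ∑ p, (S p).card < ∑ p, (gsStep prank drank S p).card := by
  classical
  apply Finset.sum_lt_sum
  · intro p _
    apply Finset.card_le_card
    rw [gsStep]
    split
    · exact Finset.subset_insert _ _
    · exact Finset.Subset.refl _
  · refine ⟨p₀, mem_univ _, ?_⟩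
    rw [gsStep, if_pos hr,
      Finset.card_insert_of_notMem (gsBest_notMem (hI p₀).1)]
    omega

lemma gsMeasure_bound (hn : 1 ≤ n) {prank drank : Fin n → Fin n → ℕ}
    {S : Fin n → Finset (Fin n)} (hI : gsInv prank drank S) :
    ∑ p, (S p).card < n * n := by
  classical
  have : ∑ p : Fin n, (S p).card < ∑ _p : Fin n, n := by
    apply Finset.sum_lt_sum_of_nonempty
    · exact univ_nonempty_iff.2 (Fin.pos_iff_nonempty.1 hn)
    · intro p _
      have h1 : S p ≠ univ := by
        intro h
        obtain ⟨x, hx⟩ := (hI p).1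
        rw [h] at hx; simp at hx
      have := Finset.card_lt_card (Finset.ssubset_univ_iff.2 h1)
      simpa using this
  simpa [Finset.sum_const, Finset.card_univ, mul_comm] using this

lemma gsIterate (hn : 1 ≤ n) (prank drank : Fin n → Fin n → ℕ) :
    ∀ (k : ℕ) (S : Fin n → Finset (Fin n)), gsInv prank drank S →
      n * n ≤ k + ∑ p, (S p).card →
      ∃ S', gsInv prank drank S' ∧ ∀ p, ¬ gsRejected prank drank S' p := by
  intro k
  induction k with
  | zero =>
    intro S hI hle
    have := gsMeasure_bound hn hI
    omega
  | succ k ih =>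
    intro S hI hle
    by_cases hr : ∃ p, gsRejected prank drank S p
    · obtain ⟨p₀, hp₀⟩ := hr
      apply ih _ (gsInv_step hI)
      have := gsMeasure_lt hI hp₀
      omega
    · exact ⟨S, hI, fun p hp => hr ⟨p, hp⟩⟩
end GS

/-- with `n ≥ 1` patients and `n` doctors, each side having
strict full preference lists (injective rank functions), a stable matching
always exists. -/
theorem stable_matching_exists (n : ℕ) (hn : 1 ≤ n)
    (prank drank : Fin n → Fin n → ℕ)
    (hp : ∀ p, Function.Injective (prank p))
    (hd : ∀ d, Function.Injective (drank d)) :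
    ∃ M : Equiv.Perm (Fin n), ∀ p d, ¬ blocks prank drank M p d := by
  classical
  have hI0 : gsInv prank drank (fun _ => (∅ : Finset (Fin n))) := by
    intro p
    constructor
    · simp [Finset.univ_nonempty_iff, Fin.pos_iff_nonempty.1 hn]
    · intro d hd; simp at hd
  obtain ⟨S, hI, hnr⟩ := gsIterate hn prank drank (n * n)
    (fun _ => ∅) hI0 (by simp)
  -- the matching
  have hinj : Function.Injective (fun p => gsBest prank p (S p)) := by
    intro p q hpq
    simp only at hpq
    by_contra hne
    have hne' : drank (gsBest prank p (S p)) p ≠ drank (gsBest prank p (S p)) q :=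
      fun h => hne (hd _ h)
    rcases hne'.lt_or_gt with h | h
    · refine hnr q ⟨p, hne, hpq, ?_⟩
      rw [← hpq]; exact h
    · exact hnr p ⟨q, fun h' => hne h'.symm, hpq.symm, h⟩
  have hbij : Function.Bijective (fun p => gsBest prank p (S p)) :=
    ⟨hinj, Finite.injective_iff_surjective.1 hinj⟩
  refine ⟨Equiv.ofBijective _ hbij, ?_⟩
  rintro p d ⟨hne, hpd, hdp⟩
  simp only [Equiv.ofBijective_apply] at hpd hne
  by_cases hmem : d ∈ S p
  · obtain ⟨q, hqb, hqlt⟩ := (hI p).2 d hmem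
    have hq : (Equiv.ofBijective _ hbij).symm d = q := by
      apply (Equiv.ofBijective _ hbij).injective
      rw [Equiv.apply_symm_apply]
      simp only [Equiv.ofBijective_apply]
      exact hqb.symm
    rw [hq] at hdp
    exact absurd hdp (not_lt.2 hqlt.le)
  · exact absurd hpd (not_lt.2 (gsBest_min (hI p).1 hmem))
end

section
/- If a matching M is patient-optimal stable and M′ is any other stable matching, then every doctor weakly prefers his partner in M′ to his partner in M; that is, the patient-optimal stable matching is doctor-pessimal. -/
/-- if `M` is the patient-optimal stable matching (stable, and
every patient weakly prefers it to every stable matching `M'`), then every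
doctor weakly prefers his partner under any stable `M'` to his partner under
`M`; i.e. the patient-optimal stable matching is doctor-pessimal. -/
theorem patient_optimal_is_doctor_pessimal (n : ℕ)
    (prank drank : Fin n → Fin n → ℕ)
    (hp : ∀ p, Function.Injective (prank p))
    (hd : ∀ d, Function.Injective (drank d))
    (M : Equiv.Perm (Fin n))
    (hMstable : ∀ p d, ¬ blocks prank drank M p d)
    (hMopt : ∀ M' : Equiv.Perm (Fin n), (∀ p d, ¬ blocks prank drank M' p d) →
        ∀ p, prank p (M p) ≤ prank p (M' p)) :
    ∀ M' : Equiv.Perm (Fin n), (∀ p d, ¬ blocks prank drank M' p d) →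
      ∀ d, drank d (M'.symm d) ≤ drank d (M.symm d) := by
  intro M' hM' d
  by_contra hlt
  push_neg at hlt
  set p := M.symm d with hpdef
  have hMp : M p = d := M.apply_symm_apply d
  have hne : M' p ≠ d := by
    intro h
    have : M'.symm d = p := by rw [← h, Equiv.symm_apply_apply]
    rw [this] at hlt
    exact lt_irrefl _ hlt
  have hopt := hMopt M' hM' p
  rw [hMp] at hopt
  have hstrict : prank p d < prank p (M' p) :=
    lt_of_le_of_ne hopt (fun h => hne ((hp p h).symm))
  exact hM' p d ⟨hne, hstrict, hlt⟩
end

section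
/- The set of patients matched (equivalently, the set of doctors matched) is the same in every stable matching; in the balanced complete-preferences case this is all of P and all of D (a special case of the Rural Hospitals / Lone Wolf theorem). -/
/-- A matching (partial injective map from patients to doctors) is stable,
for partial strict preference lists given by `prank : P → D → Option ℕ` and
`drank : D → P → Option ℕ` (where `none` means unacceptable and a lower rank
means more preferred): it is individually rational and admits no blocking
pair `(p, d)` such that `p` and `d` find each other acceptable, `p` is
unmatched or strictly prefers `d` to his partner, and `d` is unmatched or
strictly prefers `p` to his partner. -/
def IsStable {P D : Type*} (prank : P → D → Option ℕ) (drank : D → P → Option ℕ)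
    (M : P → Option D) : Prop :=
  (∀ p p' d, M p = some d → M p' = some d → p = p') ∧
  (∀ p d, M p = some d → (prank p d).isSome ∧ (drank d p).isSome) ∧
  ¬ ∃ p d rp rd, prank p d = some rp ∧ drank d p = some rd ∧
      (M p = none ∨ ∃ d' r', M p = some d' ∧ prank p d' = some r' ∧ rp < r') ∧
      ((∀ p', M p' ≠ some d) ∨
        ∃ p' r', M p' = some d ∧ drank d p' = some r' ∧ rd < r')

/-!
Let `A` be the set of patients who strictly prefer their partner in `M` to their situation in `M'`
(being unmatched in `M'` included). If `p ∈ A` is matched to `d` in `M`, then stability of `M'`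
forces `d` to be matched in `M'` to some `q` whom `d` strictly prefers to `p`, and stability of `M`
then forces `q ∈ A`. So `p ↦ M'⁻¹ (M p)` is an injective self-map of the finite set `A`, hence
onto, and every patient of `A` is matched in `M'`. In particular nobody matched in `M` is unmatched
in `M'`. The statement for doctors is the statement for patients applied to the inverse matchings.
-/

open Function Set

section Preferences

variable {α β : Type*}

def IsStrict (rank : α → β → Option ℕ) : Prop :=
  ∀ a b b' r, rank a b = some r → rank a b' = some r → b = b'

/-- `a` would rather have a partner of rank `r` than its partner `m` in a matching: one side of a
blocking pair in `IsStable`. -/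
def Prefers (rank : α → β → Option ℕ) (a : α) (r : ℕ) (m : Option β) : Prop :=
  m = none ∨ ∃ b r', m = some b ∧ rank a b = some r' ∧ r < r'

def PrefersMatch (rank : α → β → Option ℕ) (M M' : α → Option β) (a : α) : Prop :=
  ∃ b r, M a = some b ∧ rank a b = some r ∧ Prefers rank a r (M' a)

variable {rank : α → β → Option ℕ} {a : α} {b₀ : β} {r : ℕ} {m : Option β}

theorem Prefers.ne_some (h : Prefers rank a r m) (hb₀ : rank a b₀ = some r) : m ≠ some b₀ := by
  rintro rfl
  obtain h | ⟨b, r', hb, hr', hlt⟩ := h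
  · exact Option.some_ne_none _ h
  · cases hb
    cases hb₀.symm.trans hr'
    exact lt_irrefl _ hlt

theorem exists_lt_of_not_prefers (hs : IsStrict rank) (hb₀ : rank a b₀ = some r)
    (hne : m ≠ some b₀) (hm : ∀ b, m = some b → (rank a b).isSome)
    (h : ¬ Prefers rank a r m) : ∃ b r', m = some b ∧ rank a b = some r' ∧ r' < r := by
  obtain ⟨b, rfl⟩ := Option.ne_none_iff_exists'.1 fun hm' => h (Or.inl hm')
  obtain ⟨r', hr'⟩ := Option.isSome_iff_exists.1 (hm b rfl)
  have hle : r' ≤ r := not_lt.1 fun hlt => h (Or.inr ⟨b, r', rfl, hr', hlt⟩)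
  have hne' : r' ≠ r := by
    rintro rfl
    exact hne (congrArg some (hs a b b₀ r' hr' hb₀))
  exact ⟨b, r', rfl, hr', lt_of_le_of_ne hle hne'⟩

variable {M : α → Option β}

theorem partialInv_some_eq_some_iff (hM : ∀ a a' b, M a = some b → M a' = some b → a = a')
    {b : β} : partialInv M (some b) = some a ↔ M a = some b := by
  classical
  unfold partialInv
  split_ifs with h
  · rw [Option.some_inj]
    exact ⟨fun e => e ▸ h.choose_spec, fun e => hM _ _ _ h.choose_spec e⟩
  · simpa using fun e => h ⟨a, e⟩

theorem isSome_partialInv_some_iff {b : β} :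
    (partialInv M (some b)).isSome ↔ ∃ a, M a = some b := by
  classical
  unfold partialInv
  split_ifs with h <;> simp [h]

theorem prefers_partialInv_iff (hM : ∀ a a' b, M a = some b → M a' = some b → a = a')
    {rank' : β → α → Option ℕ} {b : β} :
    Prefers rank' b r (partialInv M (some b)) ↔
      (∀ a, M a ≠ some b) ∨ ∃ a r', M a = some b ∧ rank' b a = some r' ∧ r < r' := by
  simp only [Prefers, Option.eq_none_iff_forall_ne_some, ne_eq,
    partialInv_some_eq_some_iff hM]

theorem exists_forall_ne_some_of_card_le [Fintype α] [Fintype β]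
    (hcard : Fintype.card α ≤ Fintype.card β) (ha : M a = none) : ∃ b, ∀ a', M a' ≠ some b := by
  by_contra! hall
  choose F hF using hall
  have hF_inj : Injective F := fun b b' e => Option.some_inj.1 ((hF b).symm.trans (e ▸ hF b'))
  have hF_not_surj : ¬ Surjective F := fun hF_surj => by
    obtain ⟨b, rfl⟩ := hF_surj a
    exact Option.some_ne_none b ((hF b).symm.trans ha)
  exact (Fintype.card_lt_of_injective_not_surjective F hF_inj hF_not_surj).not_ge hcard

end Preferences

namespace IsStable

variable {P D : Type*} {prank : P → D → Option ℕ} {drank : D → P → Option ℕ}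
  {M M' : P → Option D} {p : P} {d : D} {rp rd : ℕ}

theorem no_blocking_pair (hM : IsStable prank drank M) (hrp : prank p d = some rp)
    (hrd : drank d p = some rd) (hpM : Prefers prank p rp (M p))
    (hdM : Prefers drank d rd (partialInv M (some d))) : False :=
  hM.2.2 ⟨p, d, rp, rd, hrp, hrd, hpM, (prefers_partialInv_iff hM.1).1 hdM⟩

theorem symm (hM : IsStable prank drank M) :
    IsStable drank prank (fun d => partialInv M (some d)) := by
  have hinv : ∀ {d p}, partialInv M (some d) = some p ↔ M p = some d :=
    partialInv_some_eq_some_iff hM.1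
  refine ⟨fun d d' p h h' => ?_, fun d p h => (hM.2.1 p d (hinv.1 h)).symm, ?_⟩
  · exact Option.some_inj.1 ((hinv.1 h).symm.trans (hinv.1 h'))
  · rintro ⟨d, p, rd, rp, hrd, hrp, hdM, hpM⟩
    refine hM.no_blocking_pair hrp hrd ?_ hdM
    rcases hpM with hunmatched | ⟨d', r', hd', hr', hlt⟩
    · exact Or.inl (Option.eq_none_iff_forall_ne_some.2 fun d' e => hunmatched d' (hinv.2 e))
    · exact Or.inr ⟨d', r', hinv.1 hd', hr', hlt⟩

theorem exists_prefersMatch (hp : IsStrict prank) (hd : IsStrict drank)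
    (hM : IsStable prank drank M) (hM' : IsStable prank drank M')
    (h : PrefersMatch prank M M' p) : ∃ q, PrefersMatch prank M M' q ∧ M' q = M p := by
  obtain ⟨d, rp, hpd, hrp, hpref⟩ := h
  obtain ⟨rd, hrd⟩ := Option.isSome_iff_exists.1 (hM.2.1 p d hpd).2
  obtain ⟨q, rq, hqd', hrq, hlt⟩ := exists_lt_of_not_prefers hd hrd
    (fun e => hpref.ne_some hrp ((partialInv_some_eq_some_iff hM'.1).1 e))
    (fun q e => (hM'.symm.2.1 d q e).1)
    (fun hdM' => hM'.no_blocking_pair hrp hrd hpref hdM')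
  rw [partialInv_some_eq_some_iff hM'.1] at hqd'
  obtain ⟨rqd, hrqd⟩ := Option.isSome_iff_exists.1 (hM'.2.1 q d hqd').1
  obtain ⟨d₁, r₁, hqd₁, hr₁, hlt₁⟩ := exists_lt_of_not_prefers hp hrqd
    (fun e => hpref.ne_some hrp (hM.1 q p d e hpd ▸ hqd'))
    (fun d₁ e => (hM.2.1 q d₁ e).1)
    (fun hqM => hM.no_blocking_pair hrqd hrq hqM
      (Or.inr ⟨p, rd, (partialInv_some_eq_some_iff hM.1).2 hpd, hrd, hlt⟩))
  exact ⟨q, ⟨d₁, r₁, hqd₁, hr₁, Or.inr ⟨d, rqd, hqd', hrqd, hlt₁⟩⟩, hqd'.trans hpd.symm⟩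

theorem isSome_of_isSome [Finite P] (hp : IsStrict prank) (hd : IsStrict drank)
    (hM : IsStable prank drank M) (hM' : IsStable prank drank M') (h : (M p).isSome) :
    (M' p).isSome := by
  by_contra hp'
  rw [Option.not_isSome_iff_eq_none] at hp'
  obtain ⟨d, hpd⟩ := Option.isSome_iff_exists.1 h
  obtain ⟨rp, hrp⟩ := Option.isSome_iff_exists.1 (hM.2.1 p d hpd).1
  have hpA : PrefersMatch prank M M' p := ⟨d, rp, hpd, hrp, Or.inl hp'⟩
  choose! f hfA hf using fun q (hq : PrefersMatch prank M M' q) =>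
    exists_prefersMatch hp hd hM hM' hq
  have hf_inj : InjOn f {q | PrefersMatch prank M M' q} := by
    intro q hq q' hq' e
    obtain ⟨d, -, hqd, -⟩ := id hq
    exact hM.1 q q' d hqd (by rw [← hf q' hq', ← e, hf q hq, hqd])
  obtain ⟨q, hq, rfl⟩ :=
    (((toFinite _).injOn_iff_bijOn_of_mapsTo hfA).1 hf_inj).surjOn hpA
  obtain ⟨d, -, hqd, -⟩ := id hq
  rw [hf q hq, hqd] at hp'
  exact Option.some_ne_none d hp'

theorem isSome_iff [Finite P] (hp : IsStrict prank) (hd : IsStrict drank)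
    (hM : IsStable prank drank M) (hM' : IsStable prank drank M') :
    (M p).isSome ↔ (M' p).isSome :=
  ⟨hM.isSome_of_isSome hp hd hM', hM'.isSome_of_isSome hp hd hM⟩

theorem exists_eq_some_iff [Finite D] (hp : IsStrict prank) (hd : IsStrict drank)
    (hM : IsStable prank drank M) (hM' : IsStable prank drank M') :
    (∃ p, M p = some d) ↔ ∃ p, M' p = some d := by
  simpa only [isSome_partialInv_some_iff] using hM.symm.isSome_iff hd hp hM'.symm (p := d)

theorem isSome_of_card_le [Fintype P] [Fintype D] (hM : IsStable prank drank M)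
    (hcard : Fintype.card P ≤ Fintype.card D) (hpc : ∀ p d, (prank p d).isSome)
    (hdc : ∀ d p, (drank d p).isSome) (p : P) : (M p).isSome := by
  by_contra hp
  rw [Option.not_isSome_iff_eq_none] at hp
  obtain ⟨d, hd⟩ := exists_forall_ne_some_of_card_le hcard hp
  obtain ⟨rp, hrp⟩ := Option.isSome_iff_exists.1 (hpc p d)
  obtain ⟨rd, hrd⟩ := Option.isSome_iff_exists.1 (hdc d p)
  exact hM.2.2 ⟨p, d, rp, rd, hrp, hrd, Or.inl hp, Or.inl hd⟩

end IsStable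

/-- Rural Hospitals / Lone Wolf theorem: the set of matched
patients (and the set of matched doctors) is the same in every stable
matching; moreover, in the balanced case with complete preference lists every
patient (hence every doctor) is matched in any stable matching. -/
theorem rural_hospitals (P D : Type*) [Fintype P] [Fintype D]
    (prank : P → D → Option ℕ) (drank : D → P → Option ℕ)
    (hp : ∀ p d d' r, prank p d = some r → prank p d' = some r → d = d')
    (hd : ∀ d p p' r, drank d p = some r → drank d p' = some r → p = p')
    (M M' : P → Option D)
    (hM : IsStable prank drank M) (hM' : IsStable prank drank M') :
    (∀ p, (M p).isSome ↔ (M' p).isSome) ∧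
    (∀ d, (∃ p, M p = some d) ↔ (∃ p, M' p = some d)) ∧
    (Fintype.card P = Fintype.card D →
      (∀ p d, (prank p d).isSome) → (∀ d p, (drank d p).isSome) →
      ∀ p, (M p).isSome) := by
  exact ⟨fun p => hM.isSome_iff hp hd hM', fun d => hM.exists_eq_some_iff hp hd hM',
    fun hcard => hM.isSome_of_card_le hcard.le⟩
end
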